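/- arXiv:2404.02715 — 5 statements merged into one kernel-verified Lean document; each statement's English description precedes it below -/
import Mathlib

section
/- For every Hausdorff ℵ₁-tree 𝐓 = (T, <_T) there exist a binary ℵ₁-tree S and a closed unbounded set D ⊆ ω₁ such that the suborders (⋃_{α∈D} T_α, <_T) and (⋃_{α∈D} S_α, ⊊) are order-isomorphic. -/
/-!
Fix an injection of every level into `ℕ`, say `z ↦ c z`, and give a node `z` of height `δ` the
position `ω * δ + c z`. A node `x` is coded by the binary sequence whose bit at `p` is `1` iff `p`
is the position of some `z ≤_T x`, and `S` consists of the initial segments of length at most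
`ω * height x` of these codes. The code of length `γ` only sees nodes of height `≤ γ / ω`, so
restriction of codes follows the tree order and the levels of `S` are countable. On the club `D`
of nonzero fixed points of `ω * ·`, the code of length `α` of a node of height `α` records exactly
its predecessors, so by the Hausdorff property it determines the node, and `x ↦ code x (height x)`
is the required isomorphism.
-/

noncomputable section

open Cardinal Set

/-- The first uncountable ordinal `ω₁`. -/
def omega1 : Ordinal := (Cardinal.aleph 1).ord

/-- A transfinite binary sequence: a function `t : α → 2` for some ordinal `α`. -/
abbrev BinSeq : Type 1 := Σ α : Ordinal, (Set.Iio α → Bool)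

namespace BinSeq

/-- The restriction `t ↾ β` of a binary sequence `t` to an initial segment of its domain. -/
def restrict (t : BinSeq) (β : Ordinal) (h : β ≤ t.1) : BinSeq :=
  ⟨β, fun x => t.2 ⟨x.1, lt_of_lt_of_le x.2 h⟩⟩

/-- `s.sub t`: `s` is an initial segment of `t` (that is, `s ⊆ t`). -/
def sub (s t : BinSeq) : Prop := ∃ h : s.1 ≤ t.1, t.restrict s.1 h = s

/-- `s.ssub t`: `s` is a proper initial segment of `t` (that is, `s ⊊ t`). -/
def ssub (s t : BinSeq) : Prop := ∃ h : s.1 < t.1, t.restrict s.1 h.le = s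

end BinSeq

/-- A candidate branch: a function `f : ω₁ → 2`. -/
abbrev BinBranch : Type 1 := Set.Iio omega1 → Bool

/-- The restriction `f ↾ α` of `f : ω₁ → 2` to an ordinal `α < ω₁`. -/
def BinBranch.restrict (f : BinBranch) (α : Ordinal) (h : α < omega1) : BinSeq :=
  ⟨α, fun x => f ⟨x.1, lt_trans x.2 h⟩⟩

/-- `C` is a closed unbounded (club) subset of `ω₁`: it is a set of countable ordinals,
unbounded in `ω₁`, and closed under suprema of bounded nonempty subsets. -/
def IsClubBelow (C : Set Ordinal) : Prop :=
  C ⊆ Set.Iio omega1 ∧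
  (∀ β < omega1, ∃ α ∈ C, β < α) ∧
  (∀ s : Set Ordinal, s ⊆ C → s.Nonempty → sSup s < omega1 → sSup s ∈ C)

/-- `S` is a stationary subset of `ω₁`: it meets every club subset of `ω₁`. -/
def IsStationaryBelow (S : Set Ordinal) : Prop :=
  ∀ C : Set Ordinal, IsClubBelow C → (S ∩ C).Nonempty

/-- `T` is a binary ℵ₁-tree: a downward closed family of binary sequences of
countable length, all of whose levels are countable. -/
structure IsBinaryAleph1Tree (T : Set BinSeq) : Prop where
  dom_lt : ∀ t ∈ T, t.1 < omega1
  downward_closed : ∀ t ∈ T, ∀ β, ∀ h : β ≤ t.1, t.restrict β h ∈ T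
  countable_levels : ∀ α < omega1, {t | t ∈ T ∧ t.1 = α}.Countable

/-- The set of cofinal branches of a binary tree:
functions `f : ω₁ → 2` all of whose initial segments lie in `T`. -/
def BinBranches (T : Set BinSeq) : Set BinBranch :=
  {f | ∀ α, ∀ h : α < omega1, f.restrict α h ∈ T}

/-- A binary Kurepa tree: a binary ℵ₁-tree with at least ℵ₂-many cofinal branches. -/
def IsBinaryKurepa (T : Set BinSeq) : Prop :=
  IsBinaryAleph1Tree T ∧ Cardinal.aleph 2 ≤ #(↥(BinBranches T))

/-- `◇(T)` for a binary tree `T`: there is a transversal `⟨t_α | α < ω₁⟩` with `t_α ∈ T_α`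
such that for every cofinal branch `f` of `T`, the set `{α < ω₁ | f ↾ α = t_α}` is stationary. -/
def BinDiamond (T : Set BinSeq) : Prop :=
  ∃ t : Ordinal → BinSeq,
    (∀ α < omega1, t α ∈ T ∧ (t α).1 = α) ∧
    ∀ f ∈ BinBranches T,
      IsStationaryBelow {α | ∃ h : α < omega1, BinBranch.restrict f α h = t α}

/-- An abstract tree: a strict partial order in which the set of predecessors
of every point is well-ordered. -/
structure OTree where
  carrier : Type
  lt : carrier → carrier → Prop
  lt_trans : ∀ {x y z}, lt x y → lt y z → lt x z
  lt_irrefl : ∀ x, ¬ lt x x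
  pred_wellOrder : ∀ x, IsWellOrder {y // lt y x} fun a b => lt a.1 b.1

namespace OTree

/-- The height of a node: the order type of its set of predecessors. -/
def height (t : OTree) (x : t.carrier) : Ordinal :=
  @Ordinal.type {y // t.lt y x} (fun a b => t.lt a.1 b.1) (t.pred_wellOrder x)

/-- The `α`-th level of the tree. -/
def level (t : OTree) (α : Ordinal) : Set t.carrier := {x | t.height x = α}

/-- An ℵ₁-tree: a tree of height `ω₁` all of whose levels are countable. -/
def IsAleph1Tree (t : OTree) : Prop :=
  (∀ x, t.height x < omega1) ∧
  (∀ α < omega1, (t.level α).Nonempty) ∧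
  (∀ α < omega1, (t.level α).Countable)

/-- A tree is Hausdorff if nodes of the same limit height
with the same predecessors are equal. -/
def Hausdorff (t : OTree) : Prop :=
  ∀ x y : t.carrier, Order.IsSuccLimit (t.height x) → t.height x = t.height y →
    {z | t.lt z x} = {z | t.lt z y} → x = y

/-- The set of cofinal branches: uncountable maximal chains. -/
def branches (t : OTree) : Set (Set t.carrier) :=
  {C | IsMaxChain t.lt C ∧ ¬ C.Countable}

/-- A Kurepa tree: an ℵ₁-tree with at least ℵ₂-many cofinal branches. -/
def IsKurepa (t : OTree) : Prop :=
  t.IsAleph1Tree ∧ Cardinal.aleph 2 ≤ #(↥t.branches)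

/-- `◇(𝐓)`: there is a transversal `⟨b_α | α < ω₁⟩` with `b_α ∈ T_α` such that for every
cofinal branch `f`, the set `{α < ω₁ | f ↾ α = b_α}` (i.e. the set of `α < ω₁` such that
`b_α` is the unique element of `f` on the `α`-th level) is stationary. -/
def Diamond (t : OTree) : Prop :=
  ∃ b : Ordinal → t.carrier,
    (∀ α < omega1, b α ∈ t.level α) ∧
    ∀ f ∈ t.branches,
      IsStationaryBelow {α | α < omega1 ∧ f ∩ t.level α = {b α}}

/-- A tree has height `ω₁` if every node has countable height
and every countable level is nonempty. -/
def HasHeightOmega1 (t : OTree) : Prop :=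
  (∀ x, t.height x < omega1) ∧ ∀ α < omega1, (t.level α).Nonempty

end OTree

open Ordinal

theorem omega0_mul_lt_omega1 {α : Ordinal} (h : α < omega1) : ω * α < omega1 :=
  isPrincipal_mul_ord Cardinal.aleph0_lt_aleph_one.le
    (Cardinal.lt_ord.2 (by simp)) h

theorem div_omega0_le (γ : Ordinal) : γ / ω ≤ γ :=
  div_le_of_le_mul (le_mul_right γ omega0_pos)

theorem isClubBelow_fixedPoints {f : Ordinal → Ordinal} (hf : Order.IsNormal f)
    (hω₁ : ∀ α < omega1, f α < omega1) : IsClubBelow {α | α < omega1 ∧ 0 < α ∧ f α = α} := by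
  refine ⟨fun α hα => hα.1, fun β hβ => ?_, fun s hs hne hlt => ?_⟩
  · have hβ' : β < nfp f (Order.succ β) := (Order.lt_succ β).trans_le (le_nfp _ _)
    have hcof : Cardinal.aleph0 < omega1.cof := by
      rw [omega1, Cardinal.isRegular_aleph_one.cof_ord]
      exact Cardinal.aleph0_lt_aleph_one
    have hsucc : Order.succ β < omega1 :=
      (isSuccLimit_ord Cardinal.aleph0_lt_aleph_one.le).succ_lt hβ
    exact ⟨_, ⟨nfp_lt_ord hcof hω₁ hsucc, pos_of_gt hβ', nfp_fp hf _⟩, hβ'⟩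
  · have hbdd : BddAbove s := ⟨omega1, fun a ha => (hs ha).1.le⟩
    obtain ⟨a, ha⟩ := hne
    refine ⟨hlt, (hs ha).2.1.trans_le (le_csSup hbdd ha), ?_⟩
    rw [hf.map_sSup ⟨a, ha⟩ hbdd, Set.EqOn.image_eq_self fun b hb => (hs hb).2.2]

namespace OTree

variable (t : OTree)

def le (x y : t.carrier) : Prop := t.lt x y ∨ x = y

variable {t}

theorem le_trans {x y z : t.carrier} (hxy : t.le x y) (hyz : t.le y z) : t.le x z := by
  rcases hxy with hxy | rfl
  · rcases hyz with hyz | rfl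
    · exact Or.inl (t.lt_trans hxy hyz)
    · exact Or.inl hxy
  · exact hyz

theorem height_eq_typein (x : t.carrier) (z : {y // t.lt y x}) :
    t.height z.1 = @typein _ (fun a b => t.lt a.1 b.1) (t.pred_wellOrder x) z := by
  let := t.pred_wellOrder x
  let := t.pred_wellOrder z.1
  rw [← type_subrel]
  exact RelIso.ordinalType_congr
    ⟨⟨fun w => ⟨⟨w.1, t.lt_trans w.2 z.2⟩, w.2⟩, fun b => ⟨b.1.1, b.2⟩,
      fun _ => rfl, fun _ => rfl⟩, Iff.rfl⟩

theorem height_lt_height {z x : t.carrier} (h : t.lt z x) : t.height z < t.height x := by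
  let := t.pred_wellOrder x
  rw [height_eq_typein x ⟨z, h⟩]
  exact typein_lt_type _ _

theorem lt_of_le_of_height_lt {z x : t.carrier} (h : t.le z x)
    (hzx : t.height z < t.height x) : t.lt z x :=
  h.resolve_right fun hzx' => hzx.ne (congrArg t.height hzx')

theorem exists_lt_height_eq {x : t.carrier} {β : Ordinal} (h : β < t.height x) :
    ∃ z, t.lt z x ∧ t.height z = β := by
  let := t.pred_wellOrder x
  let z := enum (fun a b : {y // t.lt y x} => t.lt a.1 b.1) ⟨β, h⟩
  exact ⟨z.1, z.2, (height_eq_typein x z).trans (typein_enum _ _)⟩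

theorem exists_le_height_eq {x : t.carrier} {β : Ordinal} (h : β ≤ t.height x) :
    ∃ z, t.le z x ∧ t.height z = β := by
  rcases h.lt_or_eq with h | rfl
  · obtain ⟨z, hzx, hz⟩ := exists_lt_height_eq h
    exact ⟨z, Or.inl hzx, hz⟩
  · exact ⟨x, Or.inr rfl, rfl⟩

theorem le_of_le_of_height_le {z w x : t.carrier} (hz : t.le z x) (hw : t.le w x)
    (h : t.height z ≤ t.height w) : t.le z w := by
  rcases hw with hw | rfl
  · rcases hz with hz | rfl
    · let := t.pred_wellOrder x
      rcases trichotomous_of (fun a b : {y // t.lt y x} => t.lt a.1 b.1) ⟨z, hz⟩ ⟨w, hw⟩ with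
        hzw | hzw | hwz
      · exact Or.inl hzw
      · exact Or.inr (congrArg Subtype.val hzw)
      · exact absurd h (height_lt_height hwz).not_ge
    · exact absurd h (height_lt_height hw).not_ge
  · exact hz

theorem IsAleph1Tree.countable_level (h : t.IsAleph1Tree) (α : Ordinal) :
    (t.level α).Countable := by
  by_cases hα : α < omega1
  · exact h.2.2 α hα
  · refine Set.countable_empty.mono fun x hx => hα ?_
    exact (show t.height x = α from hx) ▸ h.1 x

theorem exists_levelwise_injective (h : ∀ α, (t.level α).Countable) :
    ∃ c : t.carrier → ℕ, ∀ x y, t.height x = t.height y → c x = c y → x = y := by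
  choose f hf using fun α => Set.countable_iff_exists_injOn.1 (h α)
  refine ⟨fun x => f (t.height x) x, fun x y hxy hc => ?_⟩
  dsimp only at hc
  rw [← hxy] at hc
  exact hf (t.height x) rfl (show t.height y = t.height x from hxy.symm) hc

section Code

variable (pos : t.carrier → Ordinal)

open scoped Classical in
def code (x : t.carrier) (γ : Ordinal) : BinSeq :=
  ⟨γ, fun p => decide (∃ z, t.le z x ∧ pos z = p.1)⟩

variable {pos}

theorem code_eq_code_iff (hpos : Function.Injective pos) {x y : t.carrier} {γ : Ordinal} :
    code pos x γ = code pos y γ ↔ ∀ z, pos z < γ → (t.le z x ↔ t.le z y) := by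
  constructor
  · intro h z hz
    have := congr_fun (eq_of_heq (Sigma.mk.inj_iff.1 h).2) ⟨pos z, hz⟩
    simpa [hpos.eq_iff] using this
  · intro h
    refine Sigma.ext rfl (heq_of_eq (funext fun p => ?_))
    refine decide_eq_decide.2 ⟨?_, ?_⟩ <;> rintro ⟨z, hz, hzp⟩
    · exact ⟨z, (h z (hzp ▸ p.2)).1 hz, hzp⟩
    · exact ⟨z, (h z (hzp ▸ p.2)).2 hz, hzp⟩

end Code

section LevelPos

variable {c : t.carrier → ℕ}

variable (c) in
def levelPos (z : t.carrier) : Ordinal := ω * t.height z + c z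

theorem levelPos_injective (hc : ∀ x y, t.height x = t.height y → c x = c y → x = y) :
    Function.Injective (levelPos c) := by
  intro x y h
  have hdiv := congrArg (· / ω) h
  have hmod := congrArg (· % ω) h
  simp only [levelPos, mul_add_div _ omega0_ne_zero, div_eq_zero_of_lt (natCast_lt_omega0 _),
    add_zero, mul_add_mod_self, mod_eq_of_lt (natCast_lt_omega0 _), Nat.cast_inj] at hdiv hmod
  exact hc x y hdiv hmod

theorem height_le_div_of_levelPos_lt {z : t.carrier} {γ : Ordinal} (h : levelPos c z < γ) :
    t.height z ≤ γ / ω :=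
  (mul_le_iff_le_div omega0_ne_zero).1 (le_self_add.trans h.le)

theorem levelPos_lt_omega0_mul_iff {z : t.carrier} {α : Ordinal} :
    levelPos c z < ω * α ↔ t.height z < α := by
  refine ⟨fun h => ?_, fun h => ?_⟩
  · by_contra! hα
    have : ω * α ≤ ω * t.height z := by gcongr
    exact this.not_gt (le_self_add.trans_lt h)
  · calc levelPos c z < ω * t.height z + ω := (add_lt_add_iff_left _).2 (natCast_lt_omega0 _)
      _ = ω * Order.succ (t.height z) := (mul_succ _ _).symm
      _ ≤ ω * α := by gcongr; exact Order.succ_le_of_lt h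

variable (hc : ∀ x y, t.height x = t.height y → c x = c y → x = y)
include hc

theorem code_eq_code_of_le {w x : t.carrier} (hwx : t.le w x) {γ : Ordinal}
    (hγ : γ / ω ≤ t.height w) : code (levelPos c) w γ = code (levelPos c) x γ := by
  rw [code_eq_code_iff (levelPos_injective hc)]
  intro z hz
  exact ⟨fun hzw => le_trans hzw hwx,
    fun hzx => le_of_le_of_height_le hzx hwx ((height_le_div_of_levelPos_lt hz).trans hγ)⟩

theorem eq_of_code_eq (hH : t.Hausdorff) {x y : t.carrier} {α : Ordinal}
    (hx : t.height x = α) (hy : t.height y = α) (hα : α ≠ 0) (hωα : ω * α = α)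
    (h : code (levelPos c) x α = code (levelPos c) y α) : x = y := by
  have hlim : Order.IsSuccLimit α :=
    hωα ▸ isSuccLimit_mul_left isSuccLimit_omega0 (pos_iff_ne_zero.2 hα)
  rw [code_eq_code_iff (levelPos_injective hc)] at h
  -- below a fixed point of `ω * ·`, the code of a node lists positions of all its predecessors
  have hpos : ∀ z, t.height z < α → levelPos c z < α := fun z hz =>
    hωα ▸ levelPos_lt_omega0_mul_iff.2 hz
  refine hH x y (hx ▸ hlim) (hx.trans hy.symm) (Set.ext fun z => ⟨fun hzx => ?_, fun hzy => ?_⟩)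
  · have hz := hx ▸ height_lt_height hzx
    exact lt_of_le_of_height_lt ((h z (hpos z hz)).1 (Or.inl hzx)) (hy ▸ hz)
  · have hz := hy ▸ height_lt_height hzy
    exact lt_of_le_of_height_lt ((h z (hpos z hz)).2 (Or.inl hzy)) (hx ▸ hz)

end LevelPos

def codeTree (pos : t.carrier → Ordinal) : Set BinSeq :=
  {s | ∃ z γ, γ ≤ ω * t.height z ∧ code pos z γ = s}

theorem isBinaryAleph1Tree_codeTree (h : t.IsAleph1Tree) {c : t.carrier → ℕ}
    (hc : ∀ x y, t.height x = t.height y → c x = c y → x = y) :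
    IsBinaryAleph1Tree (codeTree (levelPos c)) := by
  refine ⟨?_, ?_, fun α _ => ?_⟩
  · rintro _ ⟨z, γ, hγ, rfl⟩
    exact hγ.trans_lt (omega0_mul_lt_omega1 (h.1 z))
  · rintro _ ⟨z, γ, hγ, rfl⟩ β hβ
    exact ⟨z, β, hβ.trans hγ, rfl⟩
  · refine ((h.countable_level (α / ω)).image fun w => code (levelPos c) w α).mono ?_
    rintro _ ⟨⟨z, γ, hγ, rfl⟩, hzα⟩
    obtain rfl : γ = α := hzα
    obtain ⟨w, hwz, hw⟩ := exists_le_height_eq (div_le_of_le_mul hγ)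
    exact ⟨w, hw, code_eq_code_of_le hc hwz hw.ge⟩

section Iso

variable {c : t.carrier → ℕ} (hc : ∀ x y, t.height x = t.height y → c x = c y → x = y)
include hc

theorem ssub_code_of_lt {x y : t.carrier} (h : t.lt x y) :
    BinSeq.ssub (code (levelPos c) x (t.height x)) (code (levelPos c) y (t.height y)) :=
  ⟨height_lt_height h, (code_eq_code_of_le hc (Or.inl h) (div_omega0_le _)).symm⟩

variable (hH : t.Hausdorff) {D : Set Ordinal} (hD : ∀ α ∈ D, α ≠ 0 ∧ ω * α = α)
include hH hD

theorem lt_iff_ssub_code {x y : t.carrier} (hx : t.height x ∈ D) :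
    t.lt x y ↔
      BinSeq.ssub (code (levelPos c) x (t.height x)) (code (levelPos c) y (t.height y)) := by
  refine ⟨ssub_code_of_lt hc, fun ⟨hxy, hyx⟩ => ?_⟩
  obtain ⟨w, hwy, hw⟩ := exists_lt_height_eq hxy
  have hwx : code (levelPos c) w (t.height x) = code (levelPos c) x (t.height x) :=
    (code_eq_code_of_le hc (Or.inl hwy) (hw ▸ div_omega0_le _)).trans hyx
  obtain rfl := eq_of_code_eq hc hH hw rfl (hD _ hx).1 (hD _ hx).2 hwx
  exact hwy

theorem exists_equiv_codeTree :
    ∃ e : {x : t.carrier // t.height x ∈ D} ≃ {s : BinSeq // s ∈ codeTree (levelPos c) ∧ s.1 ∈ D},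
      ∀ x y, t.lt x.1 y.1 ↔ BinSeq.ssub (e x).1 (e y).1 := by
  let e (x : {x : t.carrier // t.height x ∈ D}) :
      {s : BinSeq // s ∈ codeTree (levelPos c) ∧ s.1 ∈ D} :=
    ⟨code (levelPos c) x.1 (t.height x.1), ⟨x.1, _, le_mul_right _ omega0_pos, rfl⟩, x.2⟩
  have he_inj : Function.Injective e := by
    intro x y hxy
    have hcode := congrArg Subtype.val hxy
    have hheight : t.height x.1 = t.height y.1 := congrArg Sigma.fst hcode
    exact Subtype.ext (eq_of_code_eq hc hH rfl hheight.symm (hD _ x.2).1 (hD _ x.2).2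
      (hcode.trans (by rw [hheight])))
  have he_surj : Function.Surjective e := by
    rintro ⟨_, ⟨z, γ, hγ, rfl⟩, hγD⟩
    have hγz : γ ≤ t.height z := by
      rw [← (hD γ hγD).2] at hγ
      exact (mul_le_mul_iff_right₀ omega0_pos).1 hγ
    obtain ⟨w, hwz, hw⟩ := exists_le_height_eq hγz
    refine ⟨⟨w, hw ▸ hγD⟩, Subtype.ext ?_⟩
    change code (levelPos c) w (t.height w) = code (levelPos c) z γ
    rw [hw]
    exact code_eq_code_of_le hc hwz ((div_omega0_le γ).trans hw.ge)
  exact ⟨.ofBijective e ⟨he_inj, he_surj⟩, fun x y => lt_iff_ssub_code hc hH hD x.2⟩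

end Iso

end OTree

/-- For every Hausdorff ℵ₁-tree `𝐓 = (T, <_T)` there exist a binary ℵ₁-tree `S`
and a club `D ⊆ ω₁` such that `(⋃_{α ∈ D} T_α, <_T)` and `(⋃_{α ∈ D} S_α, ⊊)`
are order-isomorphic. -/
theorem statement0 (t : OTree) (h1 : t.IsAleph1Tree) (h2 : t.Hausdorff) :
    ∃ S : Set BinSeq, IsBinaryAleph1Tree S ∧
      ∃ D : Set Ordinal, IsClubBelow D ∧
        ∃ e : {x : t.carrier // t.height x ∈ D} ≃ {s : BinSeq // s ∈ S ∧ s.1 ∈ D},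
          ∀ x y, t.lt x.1 y.1 ↔ BinSeq.ssub (e x).1 (e y).1 := by
  obtain ⟨c, hc⟩ := OTree.exists_levelwise_injective h1.countable_level
  exact ⟨_, OTree.isBinaryAleph1Tree_codeTree h1 hc, _,
    isClubBelow_fixedPoints (isNormal_mul_right omega0_pos) fun _ => omega0_mul_lt_omega1,
    OTree.exists_equiv_codeTree hc h2 fun _ hα => ⟨hα.2.1.ne', hα.2.2⟩⟩
end
end

section
/- If ◇ holds, then ◇(T) holds for every binary Kurepa tree T. -/
noncomputable section

open Cardinal Set

/-- Jensen's diamond principle `◇`: there is a sequence `⟨d_α | α < ω₁⟩` with `d_α : α → 2`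
such that for every `f : ω₁ → 2` the set `{α < ω₁ | f ↾ α = d_α}` is stationary. -/
def DiamondPrinciple : Prop :=
  ∃ d : Ordinal → BinSeq,
    (∀ α < omega1, (d α).1 = α) ∧
    ∀ f : BinBranch,
      IsStationaryBelow {α | ∃ h : α < omega1, BinBranch.restrict f α h = d α}

lemma IsStationaryBelow.mono {S S' : Set Ordinal} (hS : IsStationaryBelow S) (h : S ⊆ S') :
    IsStationaryBelow S' := fun C hC =>
  (hS C hC).mono (Set.inter_subset_inter_left C h)

lemma IsBinaryKurepa.branches_nonempty {T : Set BinSeq} (hT : IsBinaryKurepa T) :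
    (BinBranches T).Nonempty := by
  rw [← Set.nonempty_coe_sort, ← Cardinal.mk_ne_zero_iff]
  exact (Cardinal.aleph_pos 2).trans_le hT.2 |>.ne'

open Classical in
/-- Only guesses that no branch of `T` can match are replaced. -/
def patchGuesses (T : Set BinSeq) (f₀ : BinBranch) (d : Ordinal → BinSeq) (α : Ordinal) :
    BinSeq :=
  if d α ∈ T ∧ (d α).1 = α then d α
  else if hα : α < omega1 then f₀.restrict α hα else d α

lemma patchGuesses_mem {T : Set BinSeq} {f₀ : BinBranch} (hf₀ : f₀ ∈ BinBranches T)
    (d : Ordinal → BinSeq) {α : Ordinal} (hα : α < omega1) :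
    patchGuesses T f₀ d α ∈ T ∧ (patchGuesses T f₀ d α).1 = α := by
  unfold patchGuesses
  split_ifs with hd
  · exact hd
  · exact ⟨hf₀ α hα, rfl⟩

lemma patchGuesses_eq_of_restrict_eq {T : Set BinSeq} {f₀ f : BinBranch}
    (hf : f ∈ BinBranches T) {d : Ordinal → BinSeq} (hdom : ∀ α < omega1, (d α).1 = α)
    {α : Ordinal} (hα : α < omega1) (hguess : f.restrict α hα = d α) :
    patchGuesses T f₀ d α = d α := by
  have hd : d α ∈ T ∧ (d α).1 = α := ⟨hguess ▸ hf α hα, hdom α hα⟩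
  rw [patchGuesses, if_pos hd]

/-- If `◇` holds, then `◇(T)` holds for every binary Kurepa tree `T`. -/
theorem statement3 (hd : DiamondPrinciple) (T : Set BinSeq) (hT : IsBinaryKurepa T) :
    BinDiamond T := by
  obtain ⟨d, hdom, hguess⟩ := hd
  obtain ⟨f₀, hf₀⟩ := hT.branches_nonempty
  refine ⟨patchGuesses T f₀ d, fun α hα => patchGuesses_mem hf₀ d hα, fun f hf => ?_⟩
  refine (hguess f).mono ?_
  rintro α ⟨hα, hfα⟩
  exact ⟨hα, hfα.trans (patchGuesses_eq_of_restrict_eq hf hdom hα hfα).symm⟩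
end
end

section
/- Let κ be a regular uncountable cardinal and let c : ω₁ × κ → ω be a coloring such that for every B ⊆ κ with |B| = κ there exists i < ω₁ with c[{i} × B] = ω. For each β < κ define g_β : ω₁ → ω by g_β(i) := c(i, β). Then for every family R of functions from ω₁ to ω with |R| < κ, there exists β < κ such that for every r ∈ R there is some i < ω₁ with r(i) = g_β(i). -/
noncomputable section

open Cardinal Set

universe u v

/- Otherwise each column `β` is missed by some `r_β ∈ R`. As `#R < #K` and `#K` is regular, a single
`r` is chosen on a set `B` of `#K` columns; a row `i` taking every value on `B` takes the value
`r i` at some `β ∈ B`, so `r_β = r` meets column `β`. -/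
theorem exists_column_meeting_all_of_isRegular {ι : Type u} {N : Type v} {K : Type (max u v)}
    (hreg : (#K).IsRegular)
    (c : ι → K → N) (hc : ∀ B : Set K, #B = #K → ∃ i, ∀ n, ∃ β ∈ B, c i β = n)
    (R : Set (ι → N)) (hR : #R < #K) :
    ∃ β : K, ∀ r ∈ R, ∃ i, r i = c i β := by
  by_contra! hmiss
  choose f hfR hf using hmiss
  obtain ⟨r, hfiber⟩ :=
    infinite_pigeonhole (fun β => (⟨f β, hfR β⟩ : R)) hreg.aleph0_le (hreg.cof_ord.symm ▸ hR)
  obtain ⟨i, hi⟩ := hc _ hfiber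
  obtain ⟨β, hβ, hcβ⟩ := hi (r.1 i)
  have hfβ : f β = r := congrArg Subtype.val hβ
  exact hf β i (hfβ ▸ hcβ.symm)

theorem statement12_general (K : Type 1) (hreg : (#K).IsRegular)
    (c : {i : Ordinal // i < omega1} → K → ℕ)
    (hc : ∀ B : Set K, #(↥B) = #K → ∃ i, ∀ n : ℕ, ∃ β ∈ B, c i β = n)
    (R : Set ({i : Ordinal // i < omega1} → ℕ)) (hR : #(↥R) < #K) :
    ∃ β : K, ∀ r ∈ R, ∃ i, r i = c i β :=
  exists_column_meeting_all_of_isRegular hreg c hc R hR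

/-- Let `κ` be a regular uncountable cardinal (here realized as the cardinality
of a type `K`) and let `c : ω₁ × κ → ω` be a coloring such that for every `B ⊆ κ` of full
cardinality `κ` there exists `i < ω₁` with `c[{i} × B] = ω`. Setting `g_β(i) := c(i, β)`,
for every family `R` of functions from `ω₁` to `ω` with `|R| < κ` there exists `β < κ` such
that every `r ∈ R` agrees with `g_β` at some point. -/
theorem statement12 (K : Type 1) (hreg : (#K).IsRegular) (hunc : Cardinal.aleph 0 < #K)
    (c : {i : Ordinal // i < omega1} → K → ℕ)
    (hc : ∀ B : Set K, #(↥B) = #K → ∃ i, ∀ n : ℕ, ∃ β ∈ B, c i β = n)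
    (R : Set ({i : Ordinal // i < omega1} → ℕ)) (hR : #(↥R) < #K) :
    ∃ β : K, ∀ r ∈ R, ∃ i, r i = c i β :=
  statement12_general K hreg c hc R hR
end
end

section
/- For every cardinal κ > ℵ₁, the Stewart poset 𝕊_κ is σ-closed: every decreasing sequence ⟨p_n | n < ω⟩ of conditions in 𝕊_κ has a lower bound in 𝕊_κ. -/
noncomputable section

open Cardinal Set

/-- A condition in the Stewart poset `𝕊_κ` (with `κ` realized as a type `K`): a triple
`(T, ε, b)` where `ε` is a countable limit ordinal, `T` is a countable downward-closed
family of binary sequences of length `≤ ε` forming a normal tree of height `ε + 1`, and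
`b` is an injection from a countable subset of `K` into the top level of `T`. -/
structure Stewart (K : Type 1) where
  eps : Ordinal
  eps_lt : eps < omega1
  eps_isLimit : Order.IsSuccLimit eps
  T : Set BinSeq
  T_countable : T.Countable
  dom_le : ∀ t ∈ T, t.1 ≤ eps
  downward_closed : ∀ t ∈ T, ∀ β, ∀ h : β ≤ t.1, t.restrict β h ∈ T
  normal : ∀ t ∈ T, ∀ β, t.1 ≤ β → β ≤ eps → ∃ t' ∈ T, t'.1 = β ∧ t.sub t'
  top_nonempty : ∃ t ∈ T, t.1 = eps
  bdom : Set K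
  bdom_countable : bdom.Countable
  b : bdom → BinSeq
  b_inj : Function.Injective b
  b_mem_top : ∀ ξ : bdom, b ξ ∈ T ∧ (b ξ).1 = eps

/-- The ordering of the Stewart poset: `q ≤ p` iff `ε_q ≥ ε_p`, `T_q` end-extends `T_p`,
`dom(b_q) ⊇ dom(b_p)`, and `b_q(ξ) ⊇ b_p(ξ)` for every `ξ ∈ dom(b_p)`. -/
def Stewart.le {K : Type 1} (q p : Stewart K) : Prop :=
  p.eps ≤ q.eps ∧
  p.T ⊆ q.T ∧
  (∀ t ∈ q.T, t.1 ≤ p.eps → t ∈ p.T) ∧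
  p.bdom ⊆ q.bdom ∧
  ∀ ξ : p.bdom, ∀ h : ξ.1 ∈ q.bdom, (p.b ξ).sub (q.b ⟨ξ.1, h⟩)


namespace BinSeq

theorem ext' {s t : BinSeq} (h1 : s.1 = t.1)
    (h2 : ∀ x (hx : x < s.1) (hx' : x < t.1), s.2 ⟨x, hx⟩ = t.2 ⟨x, hx'⟩) : s = t := by
  obtain ⟨a, f⟩ := s
  obtain ⟨b, g⟩ := t
  obtain rfl : a = b := h1
  have : f = g := funext fun x => h2 x.1 x.2 x.2
  rw [this]

theorem sub_iff' {s t : BinSeq} : s.sub t ↔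
    ∃ _ : s.1 ≤ t.1, ∀ x (hx : x < s.1) (hx' : x < t.1), s.2 ⟨x, hx⟩ = t.2 ⟨x, hx'⟩ := by
  constructor
  · rintro ⟨h, he⟩
    refine ⟨h, fun x hx hx' => ?_⟩
    have h3 : (t.restrict s.1 h).2 = s.2 := eq_of_heq (Sigma.ext_iff.mp he).2
    exact (congrFun h3 ⟨x, hx⟩).symm
  · rintro ⟨h, hp⟩
    exact ⟨h, ext' rfl (fun x hx hx' => (hp x hx' (lt_of_lt_of_le hx' h)).symm)⟩

theorem sub_refl (t : BinSeq) : t.sub t := sub_iff'.mpr ⟨le_rfl, fun x hx hx' => rfl⟩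

theorem sub_trans {s t u : BinSeq} (h1 : s.sub t) (h2 : t.sub u) : s.sub u := by
  rw [sub_iff'] at *
  obtain ⟨hl1, hp1⟩ := h1
  obtain ⟨hl2, hp2⟩ := h2
  exact ⟨hl1.trans hl2, fun x hx hx' =>
    (hp1 x hx (hx.trans_le hl1)).trans (hp2 x (hx.trans_le hl1) hx')⟩

theorem restrict_eq_self (t : BinSeq) {β} (hβ : β = t.1) (h : β ≤ t.1) : t.restrict β h = t :=
  ext' hβ (fun x hx hx' => rfl)

theorem restrict_eq_of_sub {s t : BinSeq} (h : s.sub t) {β} (hβ : β ≤ s.1) (hβ' : β ≤ t.1) :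
    t.restrict β hβ' = s.restrict β hβ := by
  obtain ⟨hl, hp⟩ := sub_iff'.mp h
  exact ext' rfl fun x hx hx' =>
    (hp x (lt_of_lt_of_le hx' hβ) (lt_of_lt_of_le hx hβ')).symm

theorem sub_unique {s s' t : BinSeq} (h : s.sub t) (h' : s'.sub t) (hd : s.1 = s'.1) : s = s' := by
  obtain ⟨hl, hp⟩ := sub_iff'.mp h
  obtain ⟨hl', hp'⟩ := sub_iff'.mp h'
  exact ext' hd fun x hx hx' =>
    (hp x hx (hx.trans_le hl)).trans (hp' x hx' (hx'.trans_le hl')).symm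

theorem exists_lt_dom (s : ℕ → BinSeq) (x : Set.Iio (⨆ n, (s n).1)) : ∃ n, x.1 < (s n).1 := by
  by_contra hc
  push_neg at hc
  exact absurd x.2 (not_lt.mpr (ciSup_le hc))

noncomputable def chainIdx (s : ℕ → BinSeq) (x : Set.Iio (⨆ n, (s n).1)) : ℕ :=
  (exists_lt_dom s x).choose

theorem chainIdx_spec (s : ℕ → BinSeq) (x : Set.Iio (⨆ n, (s n).1)) :
    x.1 < (s (chainIdx s x)).1 := (exists_lt_dom s x).choose_spec

/-- The union of an increasing ω-chain of binary sequences. -/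
noncomputable def chainLimit (s : ℕ → BinSeq) : BinSeq :=
  ⟨⨆ n, (s n).1, fun x => (s (chainIdx s x)).2 ⟨x.1, chainIdx_spec s x⟩⟩

theorem sub_of_chain {s : ℕ → BinSeq} (hc : ∀ k, (s k).sub (s (k + 1))) {n m : ℕ}
    (h : n ≤ m) : (s n).sub (s m) := by
  induction m with
  | zero => obtain rfl := Nat.le_zero.mp h; exact sub_refl _
  | succ m ih =>
    rcases Nat.lt_or_ge n (m + 1) with h' | h'
    · exact sub_trans (ih (Nat.lt_succ_iff.mp h')) (hc m)
    · obtain rfl := le_antisymm h h'; exact sub_refl _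

theorem chainLimit_apply {s : ℕ → BinSeq} (hc : ∀ k, (s k).sub (s (k + 1))) (x : Ordinal)
    (n : ℕ) (hxn : x < (s n).1) (hx : x < (chainLimit s).1) :
    (chainLimit s).2 ⟨x, hx⟩ = (s n).2 ⟨x, hxn⟩ := by
  show (s (chainIdx s ⟨x, hx⟩)).2 ⟨x, chainIdx_spec s ⟨x, hx⟩⟩ = _
  rcases Nat.le_total (chainIdx s ⟨x, hx⟩) n with h | h
  · exact (sub_iff'.mp (sub_of_chain hc h)).choose_spec x (chainIdx_spec s ⟨x, hx⟩) hxn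
  · exact ((sub_iff'.mp (sub_of_chain hc h)).choose_spec x hxn
      (chainIdx_spec s ⟨x, hx⟩)).symm

theorem sub_chainLimit {s : ℕ → BinSeq} (hc : ∀ k, (s k).sub (s (k + 1))) (n : ℕ) :
    (s n).sub (chainLimit s) :=
  sub_iff'.mpr ⟨le_ciSup (Ordinal.bddAbove_range _) n,
    fun x hx hx' => (chainLimit_apply hc x n hx hx').symm⟩

theorem chainLimit_eq {s : ℕ → BinSeq} (hc : ∀ k, (s k).sub (s (k + 1))) {k : ℕ}
    (h : (chainLimit s).1 ≤ (s k).1) : chainLimit s = s k :=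
  ext' (le_antisymm h (le_ciSup (Ordinal.bddAbove_range _) k))
    (fun x hx hx' => chainLimit_apply hc x k hx' hx)

end BinSeq

namespace Stewart

theorem le_refl' {K : Type 1} (p : Stewart K) : p.le p :=
  ⟨le_rfl, subset_rfl, fun t ht _ => ht, subset_rfl, fun ξ h => BinSeq.sub_refl _⟩

theorem le_trans' {K : Type 1} {r q p : Stewart K} (h1 : r.le q) (h2 : q.le p) : r.le p :=
  ⟨h2.1.trans h1.1, h2.2.1.trans h1.2.1,
   fun t ht htle => h2.2.2.1 t (h1.2.2.1 t ht (htle.trans h2.1)) htle,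
   h2.2.2.2.1.trans h1.2.2.2.1,
   fun ξ h => BinSeq.sub_trans (h2.2.2.2.2 ξ (h2.2.2.2.1 ξ.2))
     (h1.2.2.2.2 ⟨ξ.1, h2.2.2.2.1 ξ.2⟩ h)⟩

end Stewart

section SC13

variable {K : Type 1} (p : ℕ → Stewart K)

theorem SC13le (hdec : ∀ n, (p (n + 1)).le (p n)) {n m : ℕ} (h : n ≤ m) : (p m).le (p n) := by
  induction m with
  | zero => obtain rfl := Nat.le_zero.mp h; exact Stewart.le_refl' _
  | succ m ih =>
    rcases Nat.lt_or_ge n (m + 1) with h' | h'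
    · exact Stewart.le_trans' (hdec m) (ih (Nat.lt_succ_iff.mp h'))
    · obtain rfl := le_antisymm h h'; exact Stewart.le_refl' _

/-- The limit length. -/
def SC13eps : Ordinal := ⨆ n, (p n).eps

/-- The union tree (without top level). -/
def SC13TU : Set BinSeq := ⋃ n, (p n).T

theorem SC13eps_le (n : ℕ) : (p n).eps ≤ SC13eps p :=
  le_ciSup (Ordinal.bddAbove_range _) n

theorem SC13lt {β : Ordinal} (h : β < SC13eps p) : ∃ n, β < (p n).eps := by
  by_contra hc
  push_neg at hc
  exact absurd h (not_lt.mpr (ciSup_le hc))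

noncomputable def SC13next (hdec : ∀ n, (p (n + 1)).le (p n)) (n : ℕ) (u : BinSeq) (hu : u ∈ (p n).T) :
    {v : BinSeq // v ∈ (p (n + 1)).T ∧ v.1 = (p (n + 1)).eps ∧ u.sub v} := by
  have h := (p (n + 1)).normal u ((hdec n).2.1 hu) (p (n + 1)).eps
    (((p n).dom_le u hu).trans (hdec n).1) le_rfl
  exact ⟨h.choose, h.choose_spec.1, h.choose_spec.2.1, h.choose_spec.2.2⟩

noncomputable def SC13chain (hdec : ∀ n, (p (n + 1)).le (p n)) (m : ℕ) (t : BinSeq) (ht : t ∈ (p m).T) :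
    (k : ℕ) → {u : BinSeq // u ∈ (p (m + k)).T ∧ u.1 = (p (m + k)).eps ∧ t.sub u}
  | 0 => by
      have h := (p m).normal t ht (p m).eps ((p m).dom_le t ht) le_rfl
      exact ⟨h.choose, h.choose_spec.1, h.choose_spec.2.1, h.choose_spec.2.2⟩
  | (k + 1) =>
      let u := SC13chain hdec m t ht k
      let v := SC13next p hdec (m + k) u.1 u.2.1
      ⟨v.1, v.2.1, v.2.2.1, BinSeq.sub_trans u.2.2.2 v.2.2.2⟩

theorem SC13chain_sub (hdec : ∀ n, (p (n + 1)).le (p n)) (m : ℕ) (t : BinSeq) (ht : t ∈ (p m).T) (k : ℕ) :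
    (SC13chain p hdec m t ht k).1.sub (SC13chain p hdec m t ht (k + 1)).1 := by
  simp only [SC13chain]
  exact (SC13next p hdec (m + k) (SC13chain p hdec m t ht k).1
    (SC13chain p hdec m t ht k).2.1).2.2.2

/-- The key limit lemma. -/
theorem SC13limit (hdec : ∀ n, (p (n + 1)).le (p n)) (m : ℕ) (u : ℕ → BinSeq)
    (hmem : ∀ k, u k ∈ (p (m + k)).T) (hdomu : ∀ k, (u k).1 = (p (m + k)).eps)
    (hchain : ∀ k, (u k).sub (u (k + 1))) :
    (BinSeq.chainLimit u).1 = SC13eps p ∧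
    (∀ β (hβ : β ≤ (BinSeq.chainLimit u).1), β < SC13eps p →
      (BinSeq.chainLimit u).restrict β hβ ∈ SC13TU p) ∧
    (∀ n, SC13eps p ≤ (p n).eps → BinSeq.chainLimit u ∈ (p n).T) := by
  have hdom : (BinSeq.chainLimit u).1 = SC13eps p := by
    apply le_antisymm
    · exact ciSup_le fun k => (hdomu k) ▸ SC13eps_le p (m + k)
    · refine ciSup_le fun n => ?_
      calc (p n).eps ≤ (p (m + n)).eps := (SC13le p hdec (Nat.le_add_left n m)).1
        _ = (u n).1 := (hdomu n).symm
        _ ≤ _ := le_ciSup (Ordinal.bddAbove_range _) n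
  refine ⟨hdom, ?_, ?_⟩
  · intro β hβ hβε
    obtain ⟨j, hj⟩ := SC13lt p hβε
    have hj' : β < (u j).1 := by
      rw [hdomu j]
      exact hj.trans_le (SC13le p hdec (Nat.le_add_left j m)).1
    rw [BinSeq.restrict_eq_of_sub (BinSeq.sub_chainLimit hchain j) hj'.le hβ]
    exact Set.mem_iUnion.mpr ⟨m + j, (p (m + j)).downward_closed _ (hmem j) β hj'.le⟩
  · intro n hn
    have h1 : (BinSeq.chainLimit u).1 ≤ (u n).1 := by
      rw [hdom, hdomu n]
      exact hn.trans (SC13le p hdec (Nat.le_add_left n m)).1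
    rw [BinSeq.chainLimit_eq hchain h1]
    exact (SC13le p hdec (Nat.le_add_left n m)).2.2.1 _ (hmem n)
      (by rw [hdomu n]; exact (SC13eps_le p (m + n)).trans hn)

/-- Chosen cofinal branch through a node of the union tree. -/
noncomputable def SC13br (hdec : ∀ n, (p (n + 1)).le (p n)) (x : {y : ℕ × BinSeq // y.2 ∈ (p y.1).T}) : BinSeq :=
  BinSeq.chainLimit (fun k => (SC13chain p hdec x.1.1 x.1.2 x.2 k).1)

noncomputable def SC13n0 (ξ : ↥(⋃ n, (p n).bdom)) : ℕ := (Set.mem_iUnion.mp ξ.2).choose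

theorem SC13n0_mem (ξ : ↥(⋃ n, (p n).bdom)) : ξ.1 ∈ (p (SC13n0 p ξ)).bdom :=
  (Set.mem_iUnion.mp ξ.2).choose_spec

noncomputable def SC13bseq (hdec : ∀ n, (p (n + 1)).le (p n)) (ξ : ↥(⋃ n, (p n).bdom)) (k : ℕ) : BinSeq :=
  (p (SC13n0 p ξ + k)).b
    ⟨ξ.1, (SC13le p hdec (Nat.le_add_right _ k)).2.2.2.1 (SC13n0_mem p ξ)⟩

theorem SC13bseq_chain (hdec : ∀ n, (p (n + 1)).le (p n)) (ξ : ↥(⋃ n, (p n).bdom)) (k : ℕ) :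
    (SC13bseq p hdec ξ k).sub (SC13bseq p hdec ξ (k + 1)) :=
  (hdec (SC13n0 p ξ + k)).2.2.2.2
    ⟨ξ.1, (SC13le p hdec (Nat.le_add_right _ k)).2.2.2.1 (SC13n0_mem p ξ)⟩
    ((SC13le p hdec (Nat.le_add_right _ (k + 1))).2.2.2.1 (SC13n0_mem p ξ))

/-- The limit branch attached to an index `ξ`. -/
noncomputable def SC13bb (hdec : ∀ n, (p (n + 1)).le (p n)) (ξ : ↥(⋃ n, (p n).bdom)) : BinSeq :=
  BinSeq.chainLimit (SC13bseq p hdec ξ)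

theorem SC13b_sub (hdec : ∀ n, (p (n + 1)).le (p n)) (ξ : ↥(⋃ n, (p n).bdom)) (n : ℕ) (h : ξ.1 ∈ (p n).bdom) :
    ((p n).b ⟨ξ.1, h⟩).sub (SC13bb p hdec ξ) := by
  have h1 : ((p n).b ⟨ξ.1, h⟩).sub (SC13bseq p hdec ξ n) :=
    (SC13le p hdec (Nat.le_add_left n (SC13n0 p ξ))).2.2.2.2 ⟨ξ.1, h⟩
      ((SC13le p hdec (Nat.le_add_right _ n)).2.2.2.1 (SC13n0_mem p ξ))
  exact BinSeq.sub_trans h1 (BinSeq.sub_chainLimit (SC13bseq_chain p hdec ξ) n)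

end SC13

/-- For every cardinal `κ > ℵ₁`, the Stewart poset `𝕊_κ` is σ-closed:
every decreasing ω-sequence of conditions has a lower bound. -/
theorem statement13 (K : Type 1) (hK : Cardinal.aleph 1 < #K)
    (p : ℕ → Stewart K) (hdec : ∀ n, (p (n + 1)).le (p n)) :
    ∃ q : Stewart K, ∀ n, q.le (p n) := by
  classical
  have hεlt : SC13eps p < omega1 := by
    refine Ordinal.iSup_lt_ord ?_ fun n => (p n).eps_lt
    have : omega1.cof = Cardinal.aleph 1 := Cardinal.isRegular_aleph_one.cof_eq
    rw [this, Cardinal.mk_nat]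
    exact Cardinal.aleph0_lt_aleph_one
  have hεlim : Order.IsSuccLimit (SC13eps p) := by
    rw [Ordinal.isSuccLimit_iff]
    refine ⟨?_, Order.isSuccPrelimit_of_succ_lt ?_⟩
    · exact (((p 0).eps_isLimit.pos).trans_le (SC13eps_le p 0)).ne'
    · intro a ha
      obtain ⟨n, hn⟩ := SC13lt p ha
      exact ((p n).eps_isLimit.succ_lt hn).trans_le (SC13eps_le p n)
  have htop : ∀ t ∈ Set.range (SC13br p hdec) ∪ Set.range (SC13bb p hdec),
      t.1 = SC13eps p ∧
      (∀ β (hβ : β ≤ t.1), β < SC13eps p → t.restrict β hβ ∈ SC13TU p) ∧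
      (∀ n, SC13eps p ≤ (p n).eps → t ∈ (p n).T) := by
    rintro t (⟨x, rfl⟩ | ⟨ξ, rfl⟩)
    · exact SC13limit p hdec x.1.1 _
        (fun k => (SC13chain p hdec x.1.1 x.1.2 x.2 k).2.1)
        (fun k => (SC13chain p hdec x.1.1 x.1.2 x.2 k).2.2.1)
        (SC13chain_sub p hdec x.1.1 x.1.2 x.2)
    · exact SC13limit p hdec (SC13n0 p ξ) _
        (fun k => ((p (SC13n0 p ξ + k)).b_mem_top _).1)
        (fun k => ((p (SC13n0 p ξ + k)).b_mem_top _).2)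
        (SC13bseq_chain p hdec ξ)
  refine ⟨⟨SC13eps p, hεlt, hεlim,
    SC13TU p ∪ (Set.range (SC13br p hdec) ∪ Set.range (SC13bb p hdec)),
    ?_, ?_, ?_, ?_, ?_, ⋃ n, (p n).bdom, ?_, SC13bb p hdec, ?_, ?_⟩, ?_⟩
  · refine Set.Countable.union (Set.countable_iUnion fun n => (p n).T_countable)
      (Set.Countable.union ?_ ?_)
    · have hS : ({y : ℕ × BinSeq | y.2 ∈ (p y.1).T}).Countable := by
        refine Set.Countable.mono ?_
          ((Set.countable_univ).prod (Set.countable_iUnion fun n => (p n).T_countable))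
        rintro ⟨n, t⟩ ht
        exact Set.mem_prod.mpr ⟨Set.mem_univ n, Set.mem_iUnion.mpr ⟨n, ht⟩⟩
      haveI : Countable { y : ℕ × BinSeq // y.2 ∈ (p y.1).T } := hS.to_subtype
      exact Set.countable_range _
    · haveI := (Set.countable_iUnion fun n => (p n).bdom_countable).to_subtype
      exact Set.countable_range _
  · rintro t (ht | ht)
    · obtain ⟨n, hn⟩ := Set.mem_iUnion.mp ht
      exact ((p n).dom_le t hn).trans (SC13eps_le p n)
    · exact ((htop t ht).1).le
  · rintro t (ht | ht) β hβ
    · obtain ⟨n, hn⟩ := Set.mem_iUnion.mp ht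
      exact Or.inl (Set.mem_iUnion.mpr ⟨n, (p n).downward_closed t hn β hβ⟩)
    · rcases hβ.lt_or_eq with h | h
      · exact Or.inl ((htop t ht).2.1 β hβ ((htop t ht).1 ▸ h))
      · rw [BinSeq.restrict_eq_self t h hβ]
        exact Or.inr ht
  · rintro t (ht | ht) β h1 h2
    · obtain ⟨n, hn⟩ := Set.mem_iUnion.mp ht
      rcases h2.lt_or_eq with h | h
      · obtain ⟨i, hi⟩ := SC13lt p h
        have hj : t ∈ (p (max n i)).T := (SC13le p hdec (le_max_left n i)).2.1 hn
        have hβj : β ≤ (p (max n i)).eps :=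
          (hi.trans_le (SC13le p hdec (le_max_right n i)).1).le
        obtain ⟨t', ht', hd, hsub⟩ := (p (max n i)).normal t hj β h1 hβj
        exact ⟨t', Or.inl (Set.mem_iUnion.mpr ⟨max n i, ht'⟩), hd, hsub⟩
      · refine ⟨SC13br p hdec ⟨(n, t), hn⟩, Or.inr (Or.inl (Set.mem_range_self _)), ?_, ?_⟩
        · rw [h]
          exact (htop _ (Or.inl (Set.mem_range_self _))).1
        · exact BinSeq.sub_trans (SC13chain p hdec n t hn 0).2.2.2
            (BinSeq.sub_chainLimit (SC13chain_sub p hdec n t hn) 0)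
    · obtain rfl : β = t.1 := le_antisymm ((htop t ht).1 ▸ h2) h1
      exact ⟨t, Or.inr ht, rfl, BinSeq.sub_refl t⟩
  · obtain ⟨t0, ht0, -⟩ := (p 0).top_nonempty
    exact ⟨SC13br p hdec ⟨(0, t0), ht0⟩, Or.inr (Or.inl (Set.mem_range_self _)),
      (htop _ (Or.inl (Set.mem_range_self _))).1⟩
  · exact Set.countable_iUnion fun n => (p n).bdom_countable
  · intro ξ η h
    have hξ : ξ.1 ∈ (p (max (SC13n0 p ξ) (SC13n0 p η))).bdom :=
      (SC13le p hdec (le_max_left _ _)).2.2.2.1 (SC13n0_mem p ξ)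
    have hη : η.1 ∈ (p (max (SC13n0 p ξ) (SC13n0 p η))).bdom :=
      (SC13le p hdec (le_max_right _ _)).2.2.2.1 (SC13n0_mem p η)
    have h1 := SC13b_sub p hdec ξ _ hξ
    have h2 := SC13b_sub p hdec η _ hη
    rw [← h] at h2
    have hd : ((p (max (SC13n0 p ξ) (SC13n0 p η))).b ⟨ξ.1, hξ⟩).1
        = ((p (max (SC13n0 p ξ) (SC13n0 p η))).b ⟨η.1, hη⟩).1 := by
      rw [((p _).b_mem_top _).2, ((p _).b_mem_top _).2]
    have heq := (p (max (SC13n0 p ξ) (SC13n0 p η))).b_inj (BinSeq.sub_unique h1 h2 hd)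
    have hv := congrArg Subtype.val heq
    exact Subtype.ext hv
  · intro ξ
    exact ⟨Or.inr (Or.inr (Set.mem_range_self _)),
      (htop _ (Or.inr (Set.mem_range_self _))).1⟩
  · intro n
    refine ⟨SC13eps_le p n, fun t ht => Or.inl (Set.mem_iUnion.mpr ⟨n, ht⟩), ?_,
      fun x hx => Set.mem_iUnion.mpr ⟨n, hx⟩,
      fun ξ h => SC13b_sub p hdec ⟨ξ.1, h⟩ n ξ.2⟩
    rintro t (ht | ht) hlen
    · obtain ⟨m, hm⟩ := Set.mem_iUnion.mp ht
      rcases Nat.le_total m n with h | h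
      · exact (SC13le p hdec h).2.1 hm
      · exact (SC13le p hdec h).2.2.1 t hm hlen
    · exact (htop t ht).2.2 n ((htop t ht).1 ▸ hlen)
end
end

section
/- Assume the continuum hypothesis (2^{ℵ₀} = ℵ₁). Then for every cardinal κ > ℵ₁, the Stewart poset 𝕊_κ satisfies the ℵ₂-chain condition: every antichain in 𝕊_κ has cardinality at most ℵ₁. -/
/-!
Under CH a condition of `𝕊_κ` has only `ℵ₁` possible traces over a set `E ⊆ κ` of size `ℵ₁`:
a countable ordinal `ε`, a countable tree of countable binary sequences, and a countable partial
map `E → 2^{<ω₁}`. Adding, `ω₁` times, the domains of one representative of each trace over the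
current set yields `D` with `|D| ≤ ℵ₁` such that each `p` in the antichain has a `q` with the same
trace over a stage `E ⊆ D` that contains `dom b_p ∩ D`, and with `dom b_q ⊆ D`. Two conditions
with the same `ε` and tree whose injections agree on the common domain are compatible: grow the
tree by `ω` levels and separate the possibly colliding branches by distinct integer codes.
Hence `q = p`, so every `dom b_p ⊆ D` and `p ↦ trace over D` is injective on the antichain.
-/

noncomputable section

open Cardinal Set

open Ordinal

universe u

section Omega1Closure

variable {K : Type u} (W : Set K → Set K)

def closureStage : Ordinal.{u} → Set K
  | i => ⋃ j < i, W (closureStage j)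
termination_by i => i
decreasing_by assumption

def omega1Closure : Set K := ⋃ i < ω₁, closureStage W i

lemma closureStage_eq (i : Ordinal.{u}) :
    closureStage W i = ⋃ j < i, W (closureStage W j) := by
  rw [closureStage]

variable {W}

lemma closureStage_mono {i j : Ordinal.{u}} (h : j ≤ i) : closureStage W j ⊆ closureStage W i := by
  rw [closureStage_eq, closureStage_eq]
  exact biUnion_subset_biUnion_left fun k hk => lt_of_lt_of_le hk h

lemma apply_closureStage_subset {i : Ordinal.{u}} (hi : i < ω₁) :
    W (closureStage W i) ⊆ omega1Closure W := by
  have hsucc : i + 1 < ω₁ := (isSuccLimit_omega 1).add_one_lt hi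
  refine subset_trans ?_ (subset_biUnion_of_mem (u := closureStage W) hsucc)
  rw [closureStage_eq W (i + 1)]
  exact subset_biUnion_of_mem (u := fun j => W (closureStage W j)) (lt_add_one i)

lemma mk_closureStage_le (hW : ∀ E : Set K, #E ≤ ℵ₁ → #(W E) ≤ ℵ₁) {i : Ordinal.{u}}
    (hi : i < ω₁) : #(closureStage W i) ≤ ℵ₁ := by
  induction i using WellFoundedLT.induction with
  | _ i ih =>
    rw [closureStage_eq]
    refine mk_biUnion_le_of_le ?_ (aleph0_le_aleph 1) _ fun j hj => hW _ (ih j hj (hj.trans hi))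
    exact (lt_omega_iff_card_lt.1 hi).le

lemma mk_omega1Closure_le (hW : ∀ E : Set K, #E ≤ ℵ₁ → #(W E) ≤ ℵ₁) :
    #(omega1Closure W) ≤ ℵ₁ :=
  mk_biUnion_le_of_le (card_omega 1).le (aleph0_le_aleph 1) _ fun _ hi => mk_closureStage_le hW hi

lemma exists_closureStage_of_countable {S : Set K} (hS : S.Countable)
    (hSW : S ⊆ omega1Closure W) : ∃ i < ω₁, S ⊆ closureStage W i := by
  have hmem : ∀ x : S, ∃ i < ω₁, x.1 ∈ closureStage W i := fun x => by
    simpa [omega1Closure] using hSW x.2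
  choose stage hstage hmem using hmem
  have := hS.to_subtype
  refine ⟨⨆ x, stage x, iSup_lt_omega_one hstage, fun x hx => ?_⟩
  exact closureStage_mono (Ordinal.le_iSup stage ⟨x, hx⟩) (hmem ⟨x, hx⟩)

end Omega1Closure

theorem exists_reflecting_set {X K Γ : Type u} (supp : X → Set K)
    (hsupp : ∀ x, (supp x).Countable) (tr : Set K → X → Γ)
    (htr : ∀ E : Set K, #E ≤ ℵ₁ → #(range (tr E)) ≤ ℵ₁) :
    ∃ D : Set K, #D ≤ ℵ₁ ∧
      ∀ x, ∃ E ⊆ D, ∃ y, tr E y = tr E x ∧ supp y ⊆ D ∧ supp x ∩ D ⊆ E := by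
  set W : Set K → Set K := fun E => ⋃ γ : range (tr E), supp γ.2.choose
  have hW : ∀ E : Set K, #E ≤ ℵ₁ → #(W E) ≤ ℵ₁ := fun E hE => by
    refine (mk_iUnion_le _).trans ((mul_le_mul' (htr E hE) (ciSup_le' fun γ => ?_)).trans
      (mul_eq_self (aleph0_le_aleph 1)).le)
    exact (hsupp _).le_aleph0.trans (aleph0_le_aleph 1)
  refine ⟨omega1Closure W, mk_omega1Closure_le hW, fun x => ?_⟩
  obtain ⟨i, hi, hsub⟩ := exists_closureStage_of_countable ((hsupp x).mono inter_subset_left)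
    (inter_subset_right (s := supp x))
  let γ : range (tr (closureStage W i)) := ⟨_, x, rfl⟩
  refine ⟨closureStage W i, subset_biUnion_of_mem (u := closureStage W) hi, γ.2.choose,
    γ.2.choose_spec, ?_, hsub⟩
  exact (subset_iUnion (fun γ : range (tr (closureStage W i)) => supp γ.2.choose) γ).trans
    (apply_closureStage_subset (W := W) hi)

section ContinuumHypothesis

variable {α : Type u}

lemma aleph_one_power_aleph0 (hCH : (2 : Cardinal.{u}) ^ ℵ₀ = ℵ₁) :
    (ℵ₁ : Cardinal.{u}) ^ ℵ₀ = ℵ₁ := by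
  rw [← hCH, ← power_mul, aleph0_mul_aleph0]

lemma mk_countable_subsets_le (hCH : (2 : Cardinal.{u}) ^ ℵ₀ = ℵ₁) {s : Set α}
    (hs : #s ≤ ℵ₁) : #{t : Set α | t ⊆ s ∧ t.Countable} ≤ ℵ₁ := by
  calc #{t : Set α | t ⊆ s ∧ t.Countable}
      = #{t : Set α // t ⊆ s ∧ #t ≤ ℵ₀} := by simp only [le_aleph0_iff_set_countable]; rfl
    _ ≤ max #s ℵ₀ ^ ℵ₀ := mk_bounded_subset_le s ℵ₀
    _ ≤ ℵ₁ ^ ℵ₀ := power_le_power_right (max_le hs (aleph0_le_aleph 1))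
    _ = ℵ₁ := aleph_one_power_aleph0 hCH

end ContinuumHypothesis

lemma omega1_eq_omega_one : omega1.{u} = ω₁ := ord_aleph 1

lemma card_le_aleph0_of_lt_omega1 {o : Ordinal.{u}} (h : o < omega1) : o.card ≤ ℵ₀ := by
  rw [omega1_eq_omega_one, lt_omega_iff_card_lt] at h
  exact lt_aleph_one_iff.1 h

lemma countable_Iio_of_lt_omega1 {o : Ordinal.{u}} (h : o < omega1) : (Iio o).Countable := by
  rw [← le_aleph0_iff_set_countable, Cardinal.mk_Iio_ordinal, lift_le_aleph0]
  exact card_le_aleph0_of_lt_omega1 h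

lemma mk_Iio_omega1 : #(Iio omega1.{u}) = ℵ₁ := by
  rw [Cardinal.mk_Iio_ordinal, omega1, card_ord, lift_aleph, Ordinal.lift_one]

lemma omega0_lt_omega1 : ω < omega1.{u} := omega1_eq_omega_one ▸ omega0_lt_omega_one

lemma add_omega0_lt_omega1 {o : Ordinal.{u}} (h : o < omega1) : o + ω < omega1 :=
  isPrincipal_add_ord (aleph0_le_aleph 1) h omega0_lt_omega1

namespace BinSeq

def ofFun (f : Ordinal.{0} → Bool) (β : Ordinal.{0}) : BinSeq := ⟨β, fun i => f i⟩

lemma restrict_ofFun (f : Ordinal.{0} → Bool) {β γ : Ordinal.{0}} (h : γ ≤ β) :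
    (ofFun f β).restrict γ h = ofFun f γ := rfl

def extendIndicator (t : BinSeq) (n : ℕ) (i : Ordinal.{0}) : Bool :=
  if h : i < t.1 then t.2 ⟨i, h⟩ else decide (i = t.1 + n)

lemma ofFun_extendIndicator_of_le (t : BinSeq) (n : ℕ) {γ : Ordinal.{0}} (h : γ ≤ t.1) :
    ofFun (extendIndicator t n) γ = t.restrict γ h := by
  refine congrArg (Sigma.mk γ) (funext fun x => ?_)
  simp only [extendIndicator, dif_pos (lt_of_lt_of_le x.2 h)]

lemma sub_ofFun_extendIndicator (t : BinSeq) (n : ℕ) {β : Ordinal.{0}} (h : t.1 ≤ β) :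
    t.sub (ofFun (extendIndicator t n) β) :=
  ⟨h, ofFun_extendIndicator_of_le t n le_rfl⟩

lemma extendIndicator_add_nat (t : BinSeq) (n m : ℕ) :
    extendIndicator t n (t.1 + m) = decide (m = n) := by
  simp [extendIndicator]

lemma apply_eq_of_ofFun_eq {f g : Ordinal.{0} → Bool} {β : Ordinal.{0}}
    (h : ofFun f β = ofFun g β) {i : Ordinal.{0}} (hi : i < β) : f i = g i :=
  congrFun (eq_of_heq (Sigma.mk.inj_iff.1 h).2) ⟨i, hi⟩

end BinSeq

def countableSeqs : Set BinSeq := {s | s.1 < omega1}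

lemma mk_countableSeqs_le (hCH : (2 : Cardinal.{1}) ^ ℵ₀ = ℵ₁) : #countableSeqs ≤ ℵ₁ := by
  let ones : BinSeq → Set Ordinal.{0} := fun s => {i | ∃ h : i < s.1, s.2 ⟨i, h⟩ = true}
  have hinj : InjOn (fun s => (s.1, ones s)) countableSeqs := by
    rintro ⟨α, f⟩ - ⟨β, g⟩ - h
    obtain ⟨rfl, hfg⟩ := Prod.mk.inj h
    refine congrArg (Sigma.mk α) (funext fun i => Bool.eq_iff_iff.2 ?_)
    have hi : (∃ h : i.1 < α, f ⟨i, h⟩ = true) ↔ ∃ h : i.1 < α, g ⟨i, h⟩ = true :=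
      Iff.of_eq (congrArg (i.1 ∈ ·) hfg)
    exact ⟨fun hf => (hi.1 ⟨i.2, hf⟩).snd, fun hg => (hi.2 ⟨i.2, hg⟩).snd⟩
  have hmaps : MapsTo (fun s => (s.1, ones s)) countableSeqs
      (Iio omega1 ×ˢ {t | t ⊆ Iio omega1 ∧ t.Countable}) := fun s hs =>
    ⟨hs, fun i ⟨hi, _⟩ => hi.trans hs, (countable_Iio_of_lt_omega1 hs).mono fun i ⟨hi, _⟩ => hi⟩
  calc #countableSeqs = #((fun s => (s.1, ones s)) '' countableSeqs) :=
        (mk_image_eq_of_injOn _ _ hinj).symm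
    _ ≤ #(Iio omega1 ×ˢ {t | t ⊆ Iio omega1 ∧ t.Countable}) := mk_le_mk_of_subset hmaps.image_subset
    _ ≤ ℵ₁ * ℵ₁ := by
        rw [mk_setProd]
        exact mul_le_mul' mk_Iio_omega1.le (mk_countable_subsets_le hCH mk_Iio_omega1.le)
    _ = ℵ₁ := mul_eq_self (aleph0_le_aleph 1)

namespace Stewart

open BinSeq

variable {K : Type 1}

def newNodes (p : Stewart K) : Set BinSeq :=
  {s | ∃ t ∈ p.T, t.1 = p.eps ∧ ∃ (n : ℕ) (β : Ordinal.{0}), p.eps < β ∧ β ≤ p.eps + ω ∧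
    s = ofFun (extendIndicator t n) β}

def grownTree (p : Stewart K) : Set BinSeq := p.T ∪ p.newNodes

lemma ofFun_mem_grownTree {p : Stewart K} {t : BinSeq} (ht : t ∈ p.T) (htop : t.1 = p.eps)
    (n : ℕ) {β : Ordinal.{0}} (hβ : β ≤ p.eps + ω) :
    ofFun (extendIndicator t n) β ∈ p.grownTree := by
  rcases le_or_gt β p.eps with hle | hlt
  · left
    rw [ofFun_extendIndicator_of_le t n (htop ▸ hle)]
    exact p.downward_closed t ht β _
  · exact Or.inr ⟨t, ht, htop, n, β, hlt, hβ, rfl⟩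

lemma grownTree_countable (p : Stewart K) : p.grownTree.Countable := by
  have hβ : (Iic (p.eps + ω)).Countable := by
    rw [← Iio_insert]
    exact (countable_Iio_of_lt_omega1 (add_omega0_lt_omega1 p.eps_lt)).insert _
  refine p.T_countable.union (((p.T_countable.prod countable_univ).prod hβ).image
    (fun z : (BinSeq × ℕ) × Ordinal.{0} => ofFun (extendIndicator z.1.1 z.1.2) z.2) |>.mono ?_)
  rintro s ⟨t, ht, -, n, β, -, hβ, rfl⟩
  exact ⟨((t, n), β), ⟨⟨ht, trivial⟩, hβ⟩, rfl⟩

lemma dom_le_of_mem_grownTree {p : Stewart K} {s : BinSeq} (hs : s ∈ p.grownTree) :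
    s.1 ≤ p.eps + ω := by
  rcases hs with hs | ⟨t, -, -, n, β, -, hβ, rfl⟩
  · exact (p.dom_le s hs).trans le_self_add
  · exact hβ

lemma mem_T_of_mem_grownTree {p : Stewart K} {s : BinSeq} (hs : s ∈ p.grownTree)
    (hle : s.1 ≤ p.eps) : s ∈ p.T := by
  rcases hs with hs | ⟨t, -, -, n, β, hlt, -, rfl⟩
  · exact hs
  · exact absurd hle hlt.not_ge

lemma grownTree_downward_closed (p : Stewart K) :
    ∀ s ∈ p.grownTree, ∀ γ, ∀ h : γ ≤ s.1, s.restrict γ h ∈ p.grownTree := by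
  rintro s (hs | ⟨t, ht, htop, n, β, -, hβ, rfl⟩) γ hγ
  · exact Or.inl (p.downward_closed s hs γ hγ)
  · exact ofFun_mem_grownTree ht htop n (hγ.trans hβ)

lemma grownTree_normal (p : Stewart K) : ∀ s ∈ p.grownTree, ∀ β, s.1 ≤ β → β ≤ p.eps + ω →
    ∃ s' ∈ p.grownTree, s'.1 = β ∧ s.sub s' := by
  rintro s (hs | ⟨t, ht, htop, n, β₀, hβ₀, -, rfl⟩) β hsβ hβ
  · rcases le_or_gt β p.eps with hle | hlt
    · obtain ⟨s', hs', hdom, hsub⟩ := p.normal s hs β hsβ hle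
      exact ⟨s', Or.inl hs', hdom, hsub⟩
    · obtain ⟨t, ht, htop, ⟨hst, hres⟩⟩ := p.normal s hs p.eps (p.dom_le s hs) le_rfl
      refine ⟨ofFun (extendIndicator t 0) β, ofFun_mem_grownTree ht htop 0 hβ, rfl, hsβ, ?_⟩
      rw [restrict_ofFun, ofFun_extendIndicator_of_le t 0 (htop ▸ hst)]
      exact hres
  · exact ⟨ofFun (extendIndicator t n) β, ofFun_mem_grownTree ht htop n hβ, rfl, hsβ, rfl⟩

/-- `c` need not be injective: the distinct codes `e ξ` separate the branches. -/
def grow (p : Stewart K) (B : Set K) (hB : B.Countable) (c : B → BinSeq)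
    (hc : ∀ ξ, c ξ ∈ p.T ∧ (c ξ).1 = p.eps) (e : B → ℕ) (he : Function.Injective e) :
    Stewart K where
  eps := p.eps + ω
  eps_lt := add_omega0_lt_omega1 p.eps_lt
  eps_isLimit := isSuccLimit_add _ isSuccLimit_omega0
  T := p.grownTree
  T_countable := p.grownTree_countable
  dom_le _ := dom_le_of_mem_grownTree
  downward_closed := p.grownTree_downward_closed
  normal := p.grownTree_normal
  top_nonempty := by
    obtain ⟨t, ht, htop⟩ := p.top_nonempty
    exact ⟨_, ofFun_mem_grownTree ht htop 0 le_rfl, rfl⟩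
  bdom := B
  bdom_countable := hB
  b ξ := ofFun (extendIndicator (c ξ) (e ξ)) (p.eps + ω)
  b_inj ξ η h := by
    have hcode := apply_eq_of_ofFun_eq h (add_lt_add_right (natCast_lt_omega0 (e ξ)) p.eps)
    rw [← (hc ξ).2, extendIndicator_add_nat, (hc ξ).2, ← (hc η).2,
      extendIndicator_add_nat] at hcode
    exact he (by simpa using hcode)
  b_mem_top ξ := ⟨ofFun_mem_grownTree (hc ξ).1 (hc ξ).2 _ le_rfl, rfl⟩

lemma grow_le {p : Stewart K} {B : Set K} {hB : B.Countable} {c : B → BinSeq}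
    {hc : ∀ ξ, c ξ ∈ p.T ∧ (c ξ).1 = p.eps} {e : B → ℕ} {he : Function.Injective e}
    (q : Stewart K) (hε : q.eps = p.eps) (hT : q.T = p.T) (hqB : q.bdom ⊆ B)
    (hqc : ∀ ξ : q.bdom, c ⟨ξ, hqB ξ.2⟩ = q.b ξ) : (p.grow B hB c hc e he).le q := by
  refine ⟨hε ▸ le_self_add, hT ▸ subset_union_left, fun t ht hle => ?_, hqB, fun ξ h => ?_⟩
  · exact hT ▸ mem_T_of_mem_grownTree ht (hε ▸ hle)
  · rw [← hqc ξ]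
    exact sub_ofFun_extendIndicator _ _ (((hc _).2).trans_le le_self_add)

lemma exists_le_le_of_agree (p q : Stewart K) (hε : q.eps = p.eps) (hT : q.T = p.T)
    (hb : ∀ x (hp : x ∈ p.bdom) (hq : x ∈ q.bdom), p.b ⟨x, hp⟩ = q.b ⟨x, hq⟩) :
    ∃ r : Stewart K, r.le p ∧ r.le q := by
  classical
  let c : ↥(p.bdom ∪ q.bdom) → BinSeq := fun ξ =>
    if h : ξ.1 ∈ p.bdom then p.b ⟨ξ, h⟩ else q.b ⟨ξ, ξ.2.resolve_left h⟩
  have hc : ∀ ξ, c ξ ∈ p.T ∧ (c ξ).1 = p.eps := fun ξ => by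
    by_cases h : ξ.1 ∈ p.bdom
    · simpa [c, h] using p.b_mem_top _
    · simpa [c, h, ← hT, ← hε] using q.b_mem_top _
  have hB := p.bdom_countable.union q.bdom_countable
  have := hB.to_subtype
  obtain ⟨e, he⟩ := exists_injective_nat ↥(p.bdom ∪ q.bdom)
  refine ⟨p.grow _ hB c hc e he, grow_le p rfl rfl subset_union_left fun ξ => ?_,
    grow_le q hε hT subset_union_right fun ξ => ?_⟩
  · simp [c, ξ.2]
  · by_cases h : ξ.1 ∈ p.bdom
    · simp [c, h, hb]
    · simp [c, h]

def graph (p : Stewart K) : Set (K × BinSeq) := {z | ∃ h : z.1 ∈ p.bdom, p.b ⟨z.1, h⟩ = z.2}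

def trace (p : Stewart K) (E : Set K) : Ordinal.{0} × Set BinSeq × Set (K × BinSeq) :=
  (p.eps, p.T, p.graph ∩ Prod.fst ⁻¹' E)

def traceSpace (E : Set K) : Set (Ordinal.{0} × Set BinSeq × Set (K × BinSeq)) :=
  Iio omega1 ×ˢ {T | T ⊆ countableSeqs ∧ T.Countable} ×ˢ
    {G | G ⊆ E ×ˢ countableSeqs ∧ G.Countable}

lemma graph_countable (p : Stewart K) : p.graph.Countable := by
  have := p.bdom_countable.to_subtype
  refine (countable_range fun ξ : p.bdom => (ξ.1, p.b ξ)).mono ?_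
  rintro z ⟨h, hz⟩
  exact ⟨⟨z.1, h⟩, Prod.ext rfl hz⟩

lemma trace_mem_traceSpace (p : Stewart K) (E : Set K) : p.trace E ∈ traceSpace E := by
  refine ⟨p.eps_lt, ⟨fun t ht => (p.dom_le t ht).trans_lt p.eps_lt, p.T_countable⟩,
    ?_, p.graph_countable.mono inter_subset_left⟩
  rintro z ⟨⟨h, hz⟩, hx⟩
  refine ⟨hx, ?_⟩
  show z.2.1 < omega1
  rw [← hz, (p.b_mem_top _).2]
  exact p.eps_lt

lemma mk_traceSpace_le (hCH : (2 : Cardinal.{1}) ^ ℵ₀ = ℵ₁) {E : Set K} (hE : #E ≤ ℵ₁) :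
    #(traceSpace E) ≤ ℵ₁ := by
  have hES : #(E ×ˢ countableSeqs) ≤ ℵ₁ := by
    rw [mk_setProd]
    exact (mul_le_mul' hE (mk_countableSeqs_le hCH)).trans (mul_eq_self (aleph0_le_aleph 1)).le
  rw [traceSpace, mk_setProd, mk_setProd]
  calc _ ≤ ℵ₁ * (ℵ₁ * ℵ₁) := mul_le_mul' mk_Iio_omega1.le (mul_le_mul'
        (mk_countable_subsets_le hCH (mk_countableSeqs_le hCH)) (mk_countable_subsets_le hCH hES))
    _ = ℵ₁ := by rw [mul_eq_self (aleph0_le_aleph 1), mul_eq_self (aleph0_le_aleph 1)]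

lemma exists_le_le_of_trace_eq {p q : Stewart K} {E : Set K} (h : p.trace E = q.trace E)
    (hE : p.bdom ∩ q.bdom ⊆ E) : ∃ r : Stewart K, r.le p ∧ r.le q := by
  simp only [trace, Prod.mk.injEq] at h
  obtain ⟨hε, hT, hgraph⟩ := h
  refine exists_le_le_of_agree p q hε.symm hT.symm fun x hp hq => ?_
  have hmem : (x, p.b ⟨x, hp⟩) ∈ q.graph ∩ Prod.fst ⁻¹' E :=
    hgraph ▸ ⟨⟨hp, rfl⟩, hE ⟨hp, hq⟩⟩
  exact hmem.1.2.symm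

lemma eq_of_graph_eq {p q : Stewart K} (hε : p.eps = q.eps) (hT : p.T = q.T)
    (hgraph : p.graph = q.graph) : p = q := by
  have hbdom : p.bdom = q.bdom := by
    ext x
    exact ⟨fun hx => (hgraph ▸ ⟨hx, rfl⟩ : (x, p.b ⟨x, hx⟩) ∈ q.graph).fst,
      fun hx => (hgraph ▸ ⟨hx, rfl⟩ : (x, q.b ⟨x, hx⟩) ∈ p.graph).fst⟩
  have hb : ∀ x (hp : x ∈ p.bdom) (hq : x ∈ q.bdom), p.b ⟨x, hp⟩ = q.b ⟨x, hq⟩ :=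
    fun x hp hq => (hgraph ▸ ⟨hp, rfl⟩ : (x, p.b ⟨x, hp⟩) ∈ q.graph).snd.symm
  rcases p with ⟨_, _, _, _, _, _, _, _, _, _, _, b, _, _⟩
  rcases q with ⟨_, _, _, _, _, _, _, _, _, _, _, b', _, _⟩
  dsimp only at hε hT hbdom hb
  subst hε hT hbdom
  obtain rfl : b = b' := funext fun ξ => hb ξ.1 ξ.2 ξ.2
  rfl

lemma eq_of_trace_eq {p q : Stewart K} {E : Set K} (h : p.trace E = q.trace E)
    (hp : p.bdom ⊆ E) (hq : q.bdom ⊆ E) : p = q := by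
  have hrestrict : ∀ r : Stewart K, r.bdom ⊆ E → r.graph ∩ Prod.fst ⁻¹' E = r.graph :=
    fun r hr => inter_eq_left.2 fun z ⟨hz, _⟩ => hr hz
  simp only [trace, Prod.mk.injEq] at h
  obtain ⟨hε, hT, hG⟩ := h
  exact eq_of_graph_eq hε hT (by rwa [← hrestrict p hp, ← hrestrict q hq])

end Stewart

theorem statement14_general (hCH : (2 : Cardinal.{1}) ^ Cardinal.aleph 0 = Cardinal.aleph 1)
    (K : Type 1)
    (A : Set (Stewart K))
    (hA : ∀ p ∈ A, ∀ q ∈ A, p ≠ q → ¬ ∃ r : Stewart K, r.le p ∧ r.le q) :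
    #(↥A) ≤ Cardinal.aleph 1 := by
  rw [aleph_zero] at hCH
  obtain ⟨D, hD, hreflect⟩ := exists_reflecting_set (fun p : A => p.1.bdom)
    (fun p => p.1.bdom_countable) (fun E p => p.1.trace E) fun E hE =>
      (mk_le_mk_of_subset (range_subset_iff.2 fun p => p.1.trace_mem_traceSpace E)).trans
        (Stewart.mk_traceSpace_le hCH hE)
  have hbdom : ∀ p ∈ A, p.bdom ⊆ D := fun p hp => by
    obtain ⟨E, -, ⟨q, hq⟩, htrace, hqD, hpE⟩ := hreflect ⟨p, hp⟩
    obtain rfl : q = p := by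
      by_contra hne
      exact hA q hq p hp hne (Stewart.exists_le_le_of_trace_eq htrace
        fun x ⟨hxq, hxp⟩ => hpE ⟨hxp, hqD hxq⟩)
    exact hqD
  calc #A = #((Stewart.trace · D) '' A) := (mk_image_eq_of_injOn _ _ fun p hp q hq h =>
        Stewart.eq_of_trace_eq h (hbdom p hp) (hbdom q hq)).symm
    _ ≤ #(Stewart.traceSpace D) := mk_le_mk_of_subset (image_subset_iff.2 fun p _ =>
        p.trace_mem_traceSpace D)
    _ ≤ ℵ₁ := Stewart.mk_traceSpace_le hCH hD

/-- Assume CH. For every cardinal `κ > ℵ₁`, the Stewart poset `𝕊_κ`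
satisfies the ℵ₂-chain condition: every antichain (set of pairwise incompatible
conditions) has cardinality at most ℵ₁. -/
theorem statement14 (hCH : (2 : Cardinal.{1}) ^ Cardinal.aleph 0 = Cardinal.aleph 1)
    (K : Type 1) (hK : Cardinal.aleph 1 < #K)
    (A : Set (Stewart K))
    (hA : ∀ p ∈ A, ∀ q ∈ A, p ≠ q → ¬ ∃ r : Stewart K, r.le p ∧ r.le q) :
    #(↥A) ≤ Cardinal.aleph 1 :=
  statement14_general hCH K A hA
end
end
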